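/- Let F ⊆ V ∪ E, let s,t ∈ V, and let P be a minimum-weight s-to-t path in G∖F (so its weight is d_G(s,t,F) < ∞). Let h ≥ 1 be an integer and let B ⊆ V be a set that intersects every contiguous subpath of P consisting of exactly h edges. Let H be the complete weighted directed graph on the vertex set B ∪ {s,t} in which every edge (u,v) has weight d^{2h}_G(u,v,F). Then d_H(s,t) = d_G(s,t,F). -/

import Mathlib

open scoped ENNReal

namespace DSO

variable {V : Type*}

/-- `p` is a walk from `u` to `w` in the graph with edge relation `E`:
a nonempty list of vertices, consecutive vertices joined by edges. -/
def IsWalk (E : V → V → Prop) (p : List V) (u w : V) : Prop :=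
  p ≠ [] ∧ p.head? = some u ∧ p.getLast? = some w ∧ p.Chain' E

/-- The number of edges of a path given as a list of vertices. -/
def pathLen (p : List V) : ℕ := p.length - 1

/-- Total weight of a path, for real edge weights `w`. -/
def wt (w : V → V → ℝ) : List V → ℝ
  | [] => 0
  | [_] => 0
  | a :: b :: rest => w a b + wt w (b :: rest)

/-- Total weight of a path, for `ℝ≥0∞`-valued edge weights `w`. -/
noncomputable def ewt (w : V → V → ℝ≥0∞) : List V → ℝ≥0∞
  | [] => 0
  | [_] => 0
  | a :: b :: rest => w a b + ewt w (b :: rest)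

/-- A failure set `F ⊆ V ∪ E` is modelled as a set in `V ⊕ V × V`.
`IsFWalk E F p u w`: `p` is a `u`-to-`w` walk in `G ∖ F`, i.e. it uses no failed edge and
visits no failed vertex. -/
def IsFWalk (E : V → V → Prop) (F : Set (V ⊕ V × V)) (p : List V) (u w : V) : Prop :=
  IsWalk (fun a b => E a b ∧ Sum.inr (a, b) ∉ F) p u w ∧ ∀ x ∈ p, Sum.inl x ∉ F

/-- `d_G(u, x, F)`: the minimum weight of a `u`-to-`x` path in `G ∖ F` (`⊤` if none). -/
noncomputable def fdist (E : V → V → Prop) (w : V → V → ℝ) (F : Set (V ⊕ V × V))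
    (u x : V) : ℝ≥0∞ :=
  sInf ((fun p => ENNReal.ofReal (wt w p)) '' {p | IsFWalk E F p u x})

/-- `d^L_G(u, x, F)`: the minimum weight of a `u`-to-`x` path in `G ∖ F` containing at most
`L` edges (`⊤` if none). -/
noncomputable def fdistL (E : V → V → Prop) (w : V → V → ℝ) (F : Set (V ⊕ V × V))
    (L : ℕ) (u x : V) : ℝ≥0∞ :=
  sInf ((fun p => ENNReal.ofReal (wt w p)) '' {p | IsFWalk E F p u x ∧ pathLen p ≤ L})

/-- Weighted distance in an abstract `ℝ≥0∞`-weighted digraph `(E, w)`. -/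
noncomputable def ewdist (E : V → V → Prop) (w : V → V → ℝ≥0∞) (u x : V) : ℝ≥0∞ :=
  sInf ((fun p => ewt w p) '' {p | IsWalk E p u x})

/-- `𝒟_f`: the family of all contiguous subpaths with exactly `L` edges of the (unique)
shortest paths `P_G(s,t,F)`, over all `s, t ∈ V` and all `F ⊆ V ∪ E` with `|F| ≤ f`. -/
def Dfam (E : V → V → Prop) (w : V → V → ℝ) (f L : ℕ) : Set (List V) :=
  {Q | ∃ (s t : V) (F : Set (V ⊕ V × V)) (Pst : List V),
      F.Finite ∧ F.ncard ≤ f ∧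
      IsFWalk E F Pst s t ∧ ENNReal.ofReal (wt w Pst) = fdist E w F s t ∧
      Q <:+: Pst ∧ pathLen Q = L ∧ Q ≠ []}

end DSO

/-!
Every edge `(a, b)` of `H` weighs `d^{2h}_G(a, b, F) ≥ d_G(a, b, F)`, so by the triangle inequality
for `d_G(·, ·, F)` every `s`-`t` walk in `H` weighs at least `d_G(s, t, F)`. Conversely, since `B`
meets every `h`-edge window of `P`, the path `P` can be cut at vertices of `B` into consecutive
pieces of at most `h + 1 ≤ 2h` edges; each piece is an edge of `H` of weight at most its own, so
`d_H(s, t) ≤ w(P) = d_G(s, t, F)`.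
-/

namespace DSO

variable {V : Type*}

section Walks

variable {R : V → V → Prop} {F : Set (V ⊕ V × V)} {p q : List V} {u v x : V}

theorem IsWalk.ne_nil (hp : IsWalk R p u v) : p ≠ [] := hp.1

theorem IsWalk.append_tail (hp : IsWalk R p u v) (hq : IsWalk R q v x) :
    IsWalk R (p ++ q.tail) u x := by
  obtain ⟨hpne, hph, hpl, hpc⟩ := hp
  obtain ⟨hqne, hqh, hql, hqc⟩ := hq
  obtain ⟨v', q, rfl⟩ := List.exists_cons_of_ne_nil hqne
  obtain rfl : v = v' := by simpa using hqh.symm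
  refine ⟨by simp [hpne], by rwa [List.head?_append_of_ne_nil _ hpne], ?_, ?_⟩
  · rcases q with _ | ⟨c, q⟩
    · obtain rfl : v = x := by simpa using hql
      simpa using hpl
    · rwa [List.tail_cons, List.getLast?_append_of_ne_nil _ (List.cons_ne_nil c q),
        ← List.getLast?_cons_cons (a := v)]
  · refine List.IsChain.append hpc (List.IsChain.tail hqc) fun a ha b hb => ?_
    obtain rfl : a = v := by simpa [hpl] using ha.symm
    exact List.IsChain.rel_head? hqc hb

theorem IsWalk.cons (hp : IsWalk R p v x) (huv : R u v) : IsWalk R (u :: p) u x := by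
  obtain ⟨v', p', rfl⟩ := List.exists_cons_of_ne_nil hp.ne_nil
  obtain rfl : v = v' := by simpa using hp.2.1.symm
  exact IsWalk.append_tail (p := [u, v]) ⟨by simp, rfl, rfl, List.isChain_pair.mpr huv⟩ hp

theorem IsWalk.take (hp : IsWalk R p u v) {i : ℕ} (hi : i < p.length) :
    IsWalk R (p.take (i + 1)) u p[i] := by
  obtain ⟨hne, hh, -, hc⟩ := hp
  exact ⟨by simp [hne], by simpa [List.head?_take] using hh, by simp [List.getLast?_take, hi],
    List.IsChain.prefix hc (List.take_prefix _ _)⟩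

theorem IsWalk.drop (hp : IsWalk R p u v) {i : ℕ} (hi : i < p.length) :
    IsWalk R (p.drop i) p[i] v := by
  obtain ⟨-, -, hl, hc⟩ := hp
  have hne : p.drop i ≠ [] := by simpa using hi
  refine ⟨hne, by simp [hi], ?_, List.IsChain.suffix hc (List.drop_suffix _ _)⟩
  rwa [← List.take_append_drop i p, List.getLast?_append_of_ne_nil _ hne] at hl

theorem IsFWalk.append_tail (hp : IsFWalk R F p u v) (hq : IsFWalk R F q v x) :
    IsFWalk R F (p ++ q.tail) u x :=
  ⟨IsWalk.append_tail hp.1 hq.1, fun y hy => (List.mem_append.mp hy).elim (hp.2 y)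
    fun hy => hq.2 y (List.mem_of_mem_tail hy)⟩

theorem IsFWalk.take (hp : IsFWalk R F p u v) {i : ℕ} (hi : i < p.length) :
    IsFWalk R F (p.take (i + 1)) u p[i] :=
  ⟨IsWalk.take hp.1 hi, fun y hy => hp.2 y (List.mem_of_mem_take hy)⟩

theorem IsFWalk.drop (hp : IsFWalk R F p u v) {i : ℕ} (hi : i < p.length) :
    IsFWalk R F (p.drop i) p[i] v :=
  ⟨IsWalk.drop hp.1 hi, fun y hy => hp.2 y (List.mem_of_mem_drop hy)⟩

end Walks

section Weights

variable (w : V → V → ℝ)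

theorem wt_nonneg (hw : ∀ a b, 0 ≤ w a b) : ∀ p : List V, 0 ≤ wt w p
  | [] | [_] => le_rfl
  | a :: b :: rest => add_nonneg (hw a b) (wt_nonneg hw (b :: rest))

theorem wt_append_tail : ∀ p q : List V, p.getLast? = q.head? →
    wt w (p ++ q.tail) = wt w p + wt w q
  | [], [], _ => by simp [wt]
  | [a], b :: q, h => by
      obtain rfl : a = b := by simpa using h
      simp [wt]
  | a :: b :: rest, q, h => by
      have ih := wt_append_tail (b :: rest) q (by simpa using h)
      simp only [List.cons_append, wt] at ih ⊢
      rw [ih, add_assoc]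

theorem wt_eq_wt_take_add_wt_drop (p : List V) {i : ℕ} (hi : i < p.length) :
    wt w p = wt w (p.take (i + 1)) + wt w (p.drop i) := by
  rw [← wt_append_tail, List.tail_drop, List.take_append_drop]
  simp [List.getLast?_take, hi]

theorem ewt_cons {c : V → V → ℝ≥0∞} {p : List V} {u v : V} (hp : p.head? = some v) :
    ewt c (u :: p) = c u v + ewt c p := by
  obtain ⟨v', p', rfl⟩ :=
    List.exists_cons_of_ne_nil (List.ne_nil_of_mem (List.mem_of_mem_head? hp))
  obtain rfl : v' = v := by simpa using hp
  rfl

end Weights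

section Distances

variable {E : V → V → Prop} {w : V → V → ℝ} {F : Set (V ⊕ V × V)} {L : ℕ} {p : List V}
  {u x : V}

theorem fdist_le_ofReal_wt (hp : IsFWalk E F p u x) :
    fdist E w F u x ≤ ENNReal.ofReal (wt w p) :=
  sInf_le ⟨p, hp, rfl⟩

theorem fdistL_le_ofReal_wt (hp : IsFWalk E F p u x) (hlen : pathLen p ≤ L) :
    fdistL E w F L u x ≤ ENNReal.ofReal (wt w p) :=
  sInf_le ⟨p, ⟨hp, hlen⟩, rfl⟩

theorem fdist_le_fdistL : fdist E w F u x ≤ fdistL E w F L u x :=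
  sInf_le_sInf (Set.image_mono fun _ hp => hp.1)

theorem fdist_self_eq_zero (hx : Sum.inl x ∉ F) : fdist E w F x x = 0 :=
  le_zero_iff.mp <| by
    simpa [wt] using fdist_le_ofReal_wt (w := w) (E := E)
      (⟨⟨by simp, rfl, rfl, List.isChain_singleton x⟩, by simpa using hx⟩ :
        IsFWalk E F [x] x x)

theorem fdist_triangle (hw : ∀ a b, 0 ≤ w a b) (u v x : V) :
    fdist E w F u x ≤ fdist E w F u v + fdist E w F v x := by
  simp only [fdist]
  rw [ENNReal.sInf_add]
  refine le_iInf₂ ?_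
  rintro _ ⟨p, hp, rfl⟩
  rw [ENNReal.add_sInf]
  refine le_iInf₂ ?_
  rintro _ ⟨q, hq, rfl⟩
  have hpq : p.getLast? = q.head? := by rw [hp.1.2.2.1, hq.1.2.1]
  calc fdist E w F u x ≤ ENNReal.ofReal (wt w (p ++ q.tail)) :=
        fdist_le_ofReal_wt (hp.append_tail hq)
    _ = ENNReal.ofReal (wt w p) + ENNReal.ofReal (wt w q) := by
        rw [wt_append_tail w p q hpq, ENNReal.ofReal_add (wt_nonneg w hw p) (wt_nonneg w hw q)]

theorem ewdist_le_ewt {R : V → V → Prop} {c : V → V → ℝ≥0∞} (hp : IsWalk R p u x) :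
    ewdist R c u x ≤ ewt c p :=
  sInf_le ⟨p, hp, rfl⟩

theorem fdist_le_ewt (hw : ∀ a b, 0 ≤ w a b) {R : V → V → Prop} (hx : Sum.inl x ∉ F) :
    ∀ {p : List V} {u : V}, IsWalk R p u x → fdist E w F u x ≤ ewt (fdistL E w F L) p
  | [], _, hp => absurd rfl (IsWalk.ne_nil hp)
  | [a], u, ⟨_, hh, hl, _⟩ => by
      obtain rfl : a = u := by simpa using hh
      obtain rfl : a = x := by simpa using hl
      simp [fdist_self_eq_zero hx]
  | a :: b :: rest, u, ⟨_, hh, hl, hc⟩ => by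
      obtain rfl : a = u := by simpa using hh
      calc fdist E w F a x ≤ fdist E w F a b + fdist E w F b x := fdist_triangle hw a b x
        _ ≤ fdistL E w F L a b + ewt (fdistL E w F L) (b :: rest) :=
            add_le_add fdist_le_fdistL
              (fdist_le_ewt hw hx ⟨by simp, rfl, by simpa using hl, hc.tail⟩)

theorem fdist_le_ewdist (hw : ∀ a b, 0 ≤ w a b) (R : V → V → Prop) (hx : Sum.inl x ∉ F) :
    fdist E w F u x ≤ ewdist R (fdistL E w F L) u x :=
  le_sInf <| by
    rintro _ ⟨p, hp, rfl⟩
    exact fdist_le_ewt hw hx hp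

end Distances

theorem exists_getElem_mem_of_forall_isInfix {Q : List V} {S : Set V} {h : ℕ}
    (hS : ∀ R : List V, R <:+: Q → pathLen R = h → R ≠ [] → ∃ x ∈ R, x ∈ S)
    (hlen : h + 2 ≤ Q.length) :
    ∃ i, ∃ hi : i < Q.length, 1 ≤ i ∧ i ≤ h + 1 ∧ Q[i] ∈ S := by
  set R := (Q.drop 1).take (h + 1)
  have hR : R.length = h + 1 := by simp [R]; omega
  have hRQ : R <:+: Q := (List.take_prefix _ _).isInfix.trans (List.drop_suffix _ _).isInfix
  obtain ⟨x, hxR, hxS⟩ := hS R hRQ (by simp [pathLen, hR]) (List.ne_nil_of_length_pos (by omega))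
  obtain ⟨j, hj, rfl⟩ := List.mem_iff_getElem.mp hxR
  exact ⟨j + 1, by omega, by omega, by omega, by simpa [R] using hxS⟩

theorem exists_walk_ewt_le_ofReal_wt {E : V → V → Prop} {w : V → V → ℝ}
    (hw : ∀ a b, 0 ≤ w a b) {F : Set (V ⊕ V × V)} {S : Set V} {h L : ℕ} (hL : h + 1 ≤ L)
    {t : V} (ht : t ∈ S) {Q : List V} {u : V} (hQ : IsFWalk E F Q u t) (hu : u ∈ S)
    (hS : ∀ R : List V, R <:+: Q → pathLen R = h → R ≠ [] → ∃ x ∈ R, x ∈ S) :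
    ∃ p, IsWalk (fun a b => a ∈ S ∧ b ∈ S) p u t ∧
      ewt (fdistL E w F L) p ≤ ENNReal.ofReal (wt w Q) := by
  by_cases hshort : pathLen Q ≤ L
  · refine ⟨[u, t], ⟨by simp, rfl, rfl, List.isChain_pair.mpr ⟨hu, ht⟩⟩, ?_⟩
    simpa [ewt] using fdistL_le_ofReal_wt (w := w) hQ hshort
  obtain ⟨i, hi, hi1, hih, hiS⟩ :=
    exists_getElem_mem_of_forall_isInfix hS (by unfold pathLen at hshort; omega)
  obtain ⟨p, hp, hple⟩ := exists_walk_ewt_le_ofReal_wt hw hL ht (hQ.drop hi) hiS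
    fun R hR => hS R (hR.trans (List.drop_suffix _ _).isInfix)
  refine ⟨u :: p, hp.cons ⟨hu, hiS⟩, ?_⟩
  calc ewt (fdistL E w F L) (u :: p) = fdistL E w F L u Q[i] + ewt (fdistL E w F L) p :=
        ewt_cons hp.2.1
    _ ≤ ENNReal.ofReal (wt w (Q.take (i + 1))) + ENNReal.ofReal (wt w (Q.drop i)) :=
        add_le_add (fdistL_le_ofReal_wt (hQ.take hi) (by simp [pathLen]; omega)) hple
    _ = ENNReal.ofReal (wt w Q) := by
        rw [← ENNReal.ofReal_add (wt_nonneg w hw _) (wt_nonneg w hw _),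
          ← wt_eq_wt_take_add_wt_drop w Q hi]
termination_by Q.length
decreasing_by simp; omega

end DSO

theorem stmt14_general {V : Type*}
    (E : V → V → Prop) (w : V → V → ℝ) (hw : ∀ a b, 0 ≤ w a b)
    (F : Set (V ⊕ V × V)) (s t : V) (P : List V)
    (hP : DSO.IsFWalk E F P s t)
    (hPmin : ENNReal.ofReal (DSO.wt w P) = DSO.fdist E w F s t)
    (h : ℕ) (hh : 1 ≤ h) (B : Set V)
    (hB : ∀ Q : List V, Q <:+: P → DSO.pathLen Q = h → Q ≠ [] → ∃ x ∈ Q, x ∈ B) :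
    DSO.ewdist (fun a b => a ∈ insert s (insert t B) ∧ b ∈ insert s (insert t B))
        (fun a b => DSO.fdistL E w F (2 * h) a b) s t =
      DSO.fdist E w F s t := by
  have htF : Sum.inl t ∉ F := hP.2 t (List.mem_of_mem_getLast? hP.1.2.2.1)
  refine le_antisymm ?_ (DSO.fdist_le_ewdist hw _ htF)
  obtain ⟨p, hp, hple⟩ := DSO.exists_walk_ewt_le_ofReal_wt hw (L := 2 * h) (by omega)
    (Set.mem_insert_of_mem s (Set.mem_insert t B)) hP (Set.mem_insert s _)
    fun R hR hlen hne => (hB R hR hlen hne).imp fun _ ⟨hxR, hxB⟩ =>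
      ⟨hxR, .inr (.inr hxB)⟩
  exact (DSO.ewdist_le_ewt hp).trans (hple.trans_eq hPmin)

/-- Let `P` be a minimum-weight `s`-to-`t` path in `G∖F`, let `h ≥ 1`, and
let `B ⊆ V` intersect every contiguous subpath of `P` with exactly `h` edges. If `H` is the
complete weighted digraph on `B ∪ {s,t}` with edge weights `d^{2h}_G(u,v,F)`, then
`d_H(s,t) = d_G(s,t,F)`. -/
theorem stmt14 {V : Type*} [Fintype V]
    (E : V → V → Prop) (w : V → V → ℝ) (hw : ∀ a b, 0 ≤ w a b)
    (F : Set (V ⊕ V × V)) (s t : V) (P : List V)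
    (hP : DSO.IsFWalk E F P s t)
    (hPmin : ENNReal.ofReal (DSO.wt w P) = DSO.fdist E w F s t)
    (h : ℕ) (hh : 1 ≤ h) (B : Set V)
    (hB : ∀ Q : List V, Q <:+: P → DSO.pathLen Q = h → Q ≠ [] → ∃ x ∈ Q, x ∈ B) :
    DSO.ewdist (fun a b => a ∈ insert s (insert t B) ∧ b ∈ insert s (insert t B))
        (fun a b => DSO.fdistL E w F (2 * h) a b) s t =
      DSO.fdist E w F s t :=
  stmt14_general E w hw F s t P hP hPmin h hh B hB
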